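/- arXiv:1005.5143 — 3 statements merged into one kernel-verified Lean document; each statement's English description precedes it below -/
import Mathlib

section
/- Let G be a countable group with a sofic approximation sequence Σ = {σ_i : G → Sym(d_i)}. Let (X, μ) be a standard probability space and let R be a finite measurable partition of X. Then for every nonempty finite subset F of G and every δ > 0, one has limsup_{i→∞} (1/d_i) · log of the cardinality of the set of all maps β : {1,…,d_i} → R such that ∑_{φ ∈ R^F} | ∏_{g∈F} μ(φ(g)) − ζ( ⋂_{g∈F} σ_i(g)(β^{-1}(φ(g))) ) | ≤ δ is at least H_μ(R). (Here β^{-1}(R') denotes {k ∈ {1,…,d_i} : β(k) = R'} and σ_i(g)(A) denotes the image of the set A under the permutation σ_i(g).) -/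
/-!
Draw `β : {1,…,d} → ι` with independent coordinates of law `p r = μ (R r)`. For a pattern
`φ : F → ι`, the number of `k` with `β (σ(g)⁻¹ k) = φ g` for all `g ∈ F` has mean close to
`d ∏_g p (φ g)`, and its variance is at most the number of pairs `(k, k')` whose windows
`{σ(g)⁻¹ k}` and `{σ(g)⁻¹ k'}` overlap or are degenerate; soficity makes that `o(d²)`. By Markov's
inequality most of the product measure therefore lies on good maps. The same argument for
one-point windows shows that most of it lies on maps whose empirical distribution is `ε`-close to
`p`, and each of those has weight at most `exp (-d (H(p) - ε ∑ |log p r|))`. Hence there are at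
least `(1 - o(1)) exp (d (H(p) - ε ∑ |log p r|))` good maps.
-/

open Filter MeasureTheory

/-- A sofic approximation sequence for a group `G`: a sequence of maps
`σ i : G → Sym({1,…,d i})` with `d i → ∞` which is asymptotically multiplicative and
asymptotically free. -/
structure SoficApproxSeq (G : Type*) [Group G] where
  d : ℕ → ℕ
  d_pos : ∀ i, 0 < d i
  σ : ∀ i, G → Equiv.Perm (Fin (d i))
  d_tendsto : Tendsto d atTop atTop
  almost_mul : ∀ s t : G,
    Tendsto (fun i =>
        (({k : Fin (d i) | σ i (s * t) k = σ i s (σ i t k)}.ncard : ℝ) / d i))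
      atTop (nhds 1)
  almost_free : ∀ s t : G, s ≠ t →
    Tendsto (fun i =>
        (({k : Fin (d i) | σ i s k ≠ σ i t k}.ncard : ℝ) / d i))
      atTop (nhds 1)

open Finset Real Function Topology

section ProductWeight

variable {ι K : Type*} [Fintype ι] [Fintype K] {p : ι → ℝ}

def piWeight (p : ι → ℝ) (β : K → ι) : ℝ := ∏ k, p (β k)

lemma piWeight_nonneg (hp : p ∈ stdSimplex ℝ ι) (β : K → ι) : 0 ≤ piWeight p β :=
  prod_nonneg fun k _ => hp.1 (β k)

variable [DecidableEq K]

def piExpect (p : ι → ℝ) (f : (K → ι) → ℝ) : ℝ := ∑ β, piWeight p β * f β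

lemma sum_piWeight (hp : p ∈ stdSimplex ℝ ι) : ∑ β : K → ι, piWeight p β = 1 := by
  simp [piWeight, ← Fintype.prod_sum fun (_ : K) r => p r, hp.2]

lemma piExpect_const (hp : p ∈ stdSimplex ℝ ι) (c : ℝ) :
    piExpect p (fun _ : K → ι => c) = c := by
  rw [piExpect, ← sum_mul, sum_piWeight hp, one_mul]

lemma piExpect_sum {α : Type*} (s : Finset α) (f : α → (K → ι) → ℝ) :
    piExpect p (fun β => ∑ a ∈ s, f a β) = ∑ a ∈ s, piExpect p (f a) := by
  simp only [piExpect, mul_sum]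
  exact sum_comm

lemma piExpect_div_const (f : (K → ι) → ℝ) (c : ℝ) :
    piExpect p (fun β => f β / c) = piExpect p f / c := by
  simp only [piExpect, mul_div_assoc', sum_div]

lemma piExpect_mono (hp : p ∈ stdSimplex ℝ ι) {f g : (K → ι) → ℝ} (h : ∀ β, f β ≤ g β) :
    piExpect p f ≤ piExpect p g :=
  sum_le_sum fun β _ => mul_le_mul_of_nonneg_left (h β) (piWeight_nonneg hp β)

lemma piExpect_mul_sub_mul_sub (hp : p ∈ stdSimplex ℝ ι) (Z Z' : (K → ι) → ℝ) (m m' : ℝ) :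
    piExpect p (fun β => (Z β - m) * (Z' β - m')) =
      piExpect p (fun β => Z β * Z' β) - m' * piExpect p Z - m * piExpect p Z' + m * m' := by
  have h : ∀ β, piWeight p β * ((Z β - m) * (Z' β - m')) = piWeight p β * (Z β * Z' β)
      - m' * (piWeight p β * Z β) - m * (piWeight p β * Z' β) + m * m' * piWeight p β := by
    intro β; ring
  simp only [piExpect, h, sum_add_distrib, sum_sub_distrib, ← mul_sum, sum_piWeight hp, mul_one]

lemma piExpect_abs_le_sqrt (hp : p ∈ stdSimplex ℝ ι) (f : (K → ι) → ℝ) :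
    piExpect p (fun β => |f β|) ≤ √(piExpect p (fun β => f β ^ 2)) := by
  have hw := piWeight_nonneg (K := K) hp
  refine (Real.le_sqrt (sum_nonneg fun β _ => mul_nonneg (hw β) (abs_nonneg _))
    (sum_nonneg fun β _ => mul_nonneg (hw β) (sq_nonneg _))).2 ?_
  calc (∑ β, piWeight p β * |f β|) ^ 2
      ≤ (∑ β, piWeight p β) * ∑ β, piWeight p β * f β ^ 2 :=
        sum_sq_le_sum_mul_sum_of_sq_le_mul _ (fun β _ => hw β)
          (fun β _ => mul_nonneg (hw β) (sq_nonneg _))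
          (fun β _ => le_of_eq (by rw [mul_pow, sq_abs]; ring))
    _ = _ := by rw [sum_piWeight hp, one_mul]

lemma one_sub_div_le_sum_piWeight (hp : p ∈ stdSimplex ℝ ι) {f : (K → ι) → ℝ}
    (hf : ∀ β, 0 ≤ f β) {t : ℝ} (ht : 0 < t) :
    1 - piExpect p f / t ≤ ∑ β with f β ≤ t, piWeight p β := by
  have hw := piWeight_nonneg (K := K) hp
  have hsplit := sum_filter_add_sum_filter_not univ (fun β => f β ≤ t) (piWeight p)
  have htail : ∑ β with ¬ f β ≤ t, piWeight p β ≤ piExpect p f / t := by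
    rw [le_div_iff₀ ht, sum_mul]
    calc ∑ β with ¬ f β ≤ t, piWeight p β * t
        ≤ ∑ β with ¬ f β ≤ t, piWeight p β * f β :=
          sum_le_sum fun β hβ =>
            mul_le_mul_of_nonneg_left (not_le.1 (mem_filter.1 hβ).2).le (hw β)
      _ ≤ piExpect p f :=
          sum_le_sum_of_subset_of_nonneg (filter_subset _ _)
            fun β _ _ => mul_nonneg (hw β) (hf β)
  linarith [sum_piWeight (K := K) hp]

lemma sum_piWeight_add_sum_piWeight_sub_one_le (hp : p ∈ stdSimplex ℝ ι)
    [DecidableEq ι] (s t : Finset (K → ι)) :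
    ∑ β ∈ s, piWeight p β + ∑ β ∈ t, piWeight p β - 1 ≤ ∑ β ∈ s ∩ t, piWeight p β := by
  have hunion : ∑ β ∈ s ∪ t, piWeight p β ≤ 1 := sum_piWeight (K := K) hp ▸
    sum_le_sum_of_subset_of_nonneg (subset_univ _) fun β _ _ => piWeight_nonneg hp β
  linarith [sum_union_inter (s₁ := s) (s₂ := t) (f := piWeight p)]

lemma piExpect_indicator_eq_prod [DecidableEq ι] (hp : p ∈ stdSimplex ℝ ι) {A : Type*}
    [Fintype A] {e : A → K} (he : Injective e) (ψ : A → ι) :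
    piExpect p (fun β => if ∀ a, β (e a) = ψ a then 1 else 0) = ∏ a, p (ψ a) := by
  set g : K → ι → ℝ := fun k r => p r * if ∀ a, e a = k → r = ψ a then 1 else 0
  have hg : ∀ β : K → ι,
      piWeight p β * (if ∀ a, β (e a) = ψ a then 1 else 0) = ∏ k, g k (β k) := by
    intro β
    rw [prod_mul_distrib, Fintype.prod_boole, piWeight]
    congr 2
    exact propext ⟨fun h k a hk => hk ▸ h a, fun h a => h _ a rfl⟩
  calc piExpect p _ = ∑ β : K → ι, ∏ k, g k (β k) := sum_congr rfl fun β _ => hg β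
    _ = ∏ k, ∑ r, g k r := (Fintype.prod_sum g).symm
    _ = ∏ a, p (ψ a) := by
      refine (Fintype.prod_of_injective e he _ _ (fun k hk => ?_) fun a => ?_).symm
      · have hvac : ∀ r, (∀ a, e a = k → r = ψ a) ↔ True :=
          fun r => iff_true_intro fun a hak => (hk ⟨a, hak⟩).elim
        simp only [g, hvac, if_true, mul_one, hp.2]
      · have hiff : ∀ r, (∀ a', e a' = e a → r = ψ a') ↔ r = ψ a :=
          fun r => ⟨fun h => h a rfl, fun h a' ha' => he ha' ▸ h⟩
        simp [g, hiff]

lemma piExpect_sq_sum_sub_le (hp : p ∈ stdSimplex ℝ ι) (Z : K → (K → ι) → ℝ) (m : ℝ)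
    (hZ : ∀ k β, |Z k β - m| ≤ 1) (B : Finset (K × K))
    (hB : ∀ k k', (k, k') ∉ B → piExpect p (fun β => (Z k β - m) * (Z k' β - m)) = 0) :
    piExpect p (fun β => (∑ k, Z k β - Fintype.card K * m) ^ 2) ≤ #B := by
  have hexpand : ∀ β, (∑ k, Z k β - Fintype.card K * m) ^ 2
      = ∑ kk : K × K, (Z kk.1 β - m) * (Z kk.2 β - m) := by
    intro β
    have hcenter : ∑ k, Z k β - Fintype.card K * m = ∑ k, (Z k β - m) := by
      simp [sum_sub_distrib]
    rw [hcenter, sq, sum_mul_sum, ← Fintype.sum_prod_type']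
  have hterm : ∀ kk : K × K,
      piExpect p (fun β => (Z kk.1 β - m) * (Z kk.2 β - m)) ≤ if kk ∈ B then (1 : ℝ) else 0 := by
    rintro ⟨k, k'⟩
    split_ifs with hkk
    · refine (piExpect_mono hp fun β => ?_).trans_eq (piExpect_const hp 1)
      calc (Z k β - m) * (Z k' β - m) ≤ |Z k β - m| * |Z k' β - m| :=
            (le_abs_self _).trans (abs_mul _ _).le
        _ ≤ 1 := mul_le_one₀ (hZ k β) (abs_nonneg _) (hZ k' β)
    · exact (hB k k' hkk).le
  simp_rw [hexpand]
  rw [piExpect_sum]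
  refine (sum_le_sum fun kk _ => hterm kk).trans_eq ?_
  simp

end ProductWeight

section Windows

variable {ι K κ : Type*} [Fintype ι] [Fintype K] [DecidableEq K] [Fintype κ] [DecidableEq ι]
  {p : ι → ℝ}

def windowCount (c : κ → K → K) (β : K → ι) (φ : κ → ι) : ℕ := #{k | ∀ j, β (c j k) = φ j}

def collidingPoints (c : κ → K → K) : Finset K := {k | ¬ Injective fun j => c j k}

def collidingPairs (c : κ → K → K) : Finset (K × K) :=
  {kk | ¬ Injective (Sum.elim (fun j => c j kk.1) (fun j => c j kk.2))}

/-- Windows of non-colliding pairs see disjoint sets of independent coordinates. -/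
lemma piExpect_sq_windowCount_sub_le (hp : p ∈ stdSimplex ℝ ι) (c : κ → K → K) (φ : κ → ι) :
    piExpect p (fun β => ((windowCount c β φ : ℝ) - Fintype.card K * ∏ j, p (φ j)) ^ 2)
      ≤ #(collidingPairs c) := by
  have hm0 : 0 ≤ ∏ j, p (φ j) := prod_nonneg fun j _ => hp.1 _
  have hm1 : ∏ j, p (φ j) ≤ 1 :=
    prod_le_one (fun j _ => hp.1 _) fun j _ =>
      hp.2 ▸ single_le_sum (fun r _ => hp.1 r) (mem_univ (φ j))
  have hcount : ∀ β, (windowCount c β φ : ℝ) = ∑ k, if ∀ j, β (c j k) = φ j then 1 else 0 := by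
    simp [windowCount, sum_boole]
  simp_rw [hcount]
  refine piExpect_sq_sum_sub_le hp _ _ (fun k β => ?_) _ fun k k' hkk' => ?_
  · split_ifs <;> rw [abs_le] <;> constructor <;> linarith
  · have hinj : Injective (Sum.elim (fun j => c j k) (fun j => c j k')) := by
      simpa [collidingPairs] using hkk'
    have hprod := piExpect_indicator_eq_prod hp hinj (Sum.elim φ φ)
    simp only [Sum.forall, Sum.elim_inl, Sum.elim_inr, Fintype.prod_sum_type] at hprod
    rw [piExpect_mul_sub_mul_sub hp (fun β => if ∀ j, β (c j k) = φ j then 1 else 0)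
      (fun β => if ∀ j, β (c j k') = φ j then 1 else 0)]
    simp_rw [ite_zero_mul_ite_zero, mul_one]
    rw [hprod, piExpect_indicator_eq_prod hp (e := fun j => c j k) (hinj.comp Sum.inl_injective),
      piExpect_indicator_eq_prod hp (e := fun j => c j k') (hinj.comp Sum.inr_injective)]
    ring

lemma card_collidingPairs_le {c : κ → K → K} (hc : ∀ j, Injective (c j)) :
    #(collidingPairs c) ≤ (2 * #(collidingPoints c) + Fintype.card κ ^ 2) * Fintype.card K := by
  set P := collidingPoints c
  set T : κ × κ → Finset (K × K) := fun jj => {kk | c jj.1 kk.1 = c jj.2 kk.2}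
  have hsub : collidingPairs c ⊆ P ×ˢ univ ∪ univ ×ˢ P ∪ univ.biUnion T := by
    intro kk hkk
    contrapose! hkk
    simp only [mem_union, mem_product, mem_univ, and_true, true_and, mem_biUnion, not_or,
      not_exists, P, T, collidingPoints, mem_filter, not_not] at hkk
    simpa [collidingPairs] using hkk.1.1.sumElim hkk.1.2 fun j j' => hkk.2 (j, j')
  have hT : ∀ jj, #(T jj) ≤ Fintype.card K := fun jj =>
    card_le_card_of_injOn Prod.fst (fun _ _ => mem_coe.2 (mem_univ _))
      fun kk hkk kk' hkk' h => Prod.ext h <| hc jj.2 <| by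
        simp only [T, coe_filter, Set.mem_ofPred_eq, mem_univ, true_and] at hkk hkk'
        rw [← hkk, ← hkk', h]
  calc #(collidingPairs c) ≤ #(P ×ˢ univ ∪ univ ×ˢ P ∪ univ.biUnion T) := card_le_card hsub
    _ ≤ #P * Fintype.card K + Fintype.card K * #P + Fintype.card (κ × κ) * Fintype.card K := by
      grw [card_union_le, card_union_le, card_product, card_product, card_biUnion_le,
        sum_le_card_nsmul _ _ _ fun jj _ => hT jj]
      simp
    _ = _ := by rw [Fintype.card_prod]; ring

lemma card_collidingPoints_le (c : κ → K → K) [DecidableEq κ] :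
    #(collidingPoints c) ≤ ∑ jj ∈ (univ : Finset κ).offDiag, #{k | c jj.1 k = c jj.2 k} :=
  (card_le_card fun k hk => by
    obtain ⟨j, j', hjj', hne⟩ := not_injective_iff.1 (mem_filter.1 hk).2
    exact mem_biUnion.2 ⟨(j, j'), by simpa using hne, by simpa using hjj'⟩).trans card_biUnion_le

variable [DecidableEq κ]

noncomputable def windowDeviation (p : ι → ℝ) (c : κ → K → K) (β : K → ι) : ℝ :=
  ∑ φ : κ → ι, |∏ j, p (φ j) - windowCount c β φ / Fintype.card K|

lemma piExpect_windowDeviation_le [Nonempty K] (hp : p ∈ stdSimplex ℝ ι) (c : κ → K → K) :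
    piExpect p (windowDeviation p c) ≤
      Fintype.card ι ^ Fintype.card κ * (√(#(collidingPairs c) : ℝ) / Fintype.card K) := by
  have hd : (0 : ℝ) < Fintype.card K := by exact_mod_cast Fintype.card_pos
  have hφ : ∀ φ : κ → ι, piExpect p (fun β => |∏ j, p (φ j) - windowCount c β φ / Fintype.card K|)
      ≤ √(#(collidingPairs c) : ℝ) / Fintype.card K := by
    intro φ
    have hscale : ∀ β, |∏ j, p (φ j) - windowCount c β φ / Fintype.card K|
        = |(windowCount c β φ : ℝ) - Fintype.card K * ∏ j, p (φ j)| / Fintype.card K := by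
      intro β
      rw [abs_sub_comm, ← abs_of_pos hd, ← abs_div, abs_of_pos hd, sub_div,
        mul_div_cancel_left₀ _ hd.ne']
    simp_rw [hscale, piExpect_div_const]
    gcongr
    exact (piExpect_abs_le_sqrt hp _).trans (sqrt_le_sqrt (piExpect_sq_windowCount_sub_le hp c φ))
  calc piExpect p (windowDeviation p c)
      = ∑ φ : κ → ι, piExpect p (fun β => |∏ j, p (φ j) - windowCount c β φ / Fintype.card K|) :=
        piExpect_sum _ _
    _ ≤ ∑ _φ : κ → ι, √(#(collidingPairs c) : ℝ) / Fintype.card K := sum_le_sum fun φ _ => hφ φ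
    _ = _ := by simp

lemma one_sub_le_sum_piWeight_windowDeviation_le [Nonempty K] (hp : p ∈ stdSimplex ℝ ι)
    (c : κ → K → K) {δ : ℝ} (hδ : 0 < δ) :
    1 - Fintype.card ι ^ Fintype.card κ * (√(#(collidingPairs c) : ℝ) / Fintype.card K) / δ
      ≤ ∑ β with windowDeviation p c β ≤ δ, piWeight p β :=
  (sub_le_sub_left (div_le_div_of_nonneg_right (piExpect_windowDeviation_le hp c) hδ.le) 1).trans
    (one_sub_div_le_sum_piWeight hp (fun _ => sum_nonneg fun _ _ => abs_nonneg _) hδ)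

end Windows

section Typicality

variable {ι K : Type*} [Fintype ι] [Fintype K] [DecidableEq ι] {p : ι → ℝ}

noncomputable def shannonEntropy (p : ι → ℝ) : ℝ := -∑ r, p r * log (p r)

lemma pow_le_exp_mul_log {x : ℝ} (hx : 0 ≤ x) (n : ℕ) : x ^ n ≤ exp (n * log x) := by
  rcases hx.eq_or_lt with rfl | hx
  · cases n <;> simp
  · rw [← exp_log (pow_pos hx n), log_pow]

lemma piWeight_le_exp [Nonempty K] (hp : p ∈ stdSimplex ℝ ι) {ε : ℝ} {β : K → ι}
    (hβ : ∀ r, |p r - #{k | β k = r} / Fintype.card K| ≤ ε) :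
    piWeight p β ≤ exp (-(Fintype.card K * (shannonEntropy p - ε * ∑ r, |log (p r)|))) := by
  have hd : (0 : ℝ) < Fintype.card K := by exact_mod_cast Fintype.card_pos
  set n : ι → ℕ := fun r => #{k | β k = r}
  have hprod : piWeight p β = ∏ r, p r ^ n r := by
    rw [piWeight, ← prod_fiberwise univ β (fun k => p (β k))]
    refine prod_congr rfl fun r _ => ?_
    rw [prod_congr rfl fun k hk => by rw [(mem_filter.1 hk).2], prod_const]
  have hterm : ∀ r, (n r : ℝ) * log (p r)
      ≤ Fintype.card K * (p r * log (p r) + ε * |log (p r)|) := by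
    intro r
    have hsplit : (n r : ℝ) * log (p r) = Fintype.card K *
        (p r * log (p r) + (n r / Fintype.card K - p r) * log (p r)) := by
      field_simp
      ring
    have hdev : (n r / Fintype.card K - p r) * log (p r) ≤ ε * |log (p r)| :=
      calc (n r / Fintype.card K - p r) * log (p r)
          ≤ |n r / Fintype.card K - p r| * |log (p r)| := (le_abs_self _).trans (abs_mul _ _).le
        _ ≤ ε * |log (p r)| := by
          gcongr
          rw [abs_sub_comm]
          exact hβ r
    rw [hsplit]
    exact mul_le_mul_of_nonneg_left (add_le_add_right hdev _) hd.le
  calc piWeight p β = ∏ r, p r ^ n r := hprod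
    _ ≤ ∏ r, exp (n r * log (p r)) :=
        prod_le_prod (fun r _ => pow_nonneg (hp.1 r) _) fun r _ => pow_le_exp_mul_log (hp.1 r) _
    _ = exp (∑ r, n r * log (p r)) := (exp_sum _ _).symm
    _ ≤ _ := by
      gcongr
      refine (sum_le_sum fun r _ => hterm r).trans_eq ?_
      simp only [shannonEntropy, ← mul_sum, sum_add_distrib]
      ring

lemma abs_sub_card_div_le_windowDeviation (p : ι → ℝ) (β : K → ι) (r : ι) :
    |p r - #{k | β k = r} / Fintype.card K|
      ≤ windowDeviation p (fun (_ : Unit) (k : K) => k) β := by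
  have h := single_le_sum (f := fun φ : Unit → ι =>
      |∏ j, p (φ j) - windowCount (fun (_ : Unit) (k : K) => k) β φ / Fintype.card K|)
    (fun _ _ => abs_nonneg _) (mem_univ fun _ => r)
  simpa [windowDeviation, windowCount] using h

variable [DecidableEq K]

lemma card_collidingPairs_id_le :
    #(collidingPairs (fun (_ : Unit) (k : K) => k)) ≤ Fintype.card K := by
  simpa [collidingPoints, Function.injective_of_subsingleton] using
    card_collidingPairs_le (c := fun (_ : Unit) (k : K) => k) fun _ => injective_id

theorem exp_mul_le_card_windowDeviation_le [Nonempty K] {κ : Type*} [Fintype κ] [DecidableEq κ]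
    (hp : p ∈ stdSimplex ℝ ι) (c : κ → K → K) {δ ε : ℝ} (hδ : 0 < δ) (hε : 0 < ε) :
    (1 - Fintype.card ι ^ Fintype.card κ * (√(#(collidingPairs c) : ℝ) / Fintype.card K) / δ
        - Fintype.card ι * (√(Fintype.card K : ℝ) / Fintype.card K) / ε)
      * exp (Fintype.card K * (shannonEntropy p - ε * ∑ r, |log (p r)|))
      ≤ #{β | windowDeviation p c β ≤ δ} := by
  set X := Fintype.card K * (shannonEntropy p - ε * ∑ r, |log (p r)|)
  set good : Finset (K → ι) := {β | windowDeviation p c β ≤ δ}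
  -- typicality of `β` (empirical law `ε`-close to `p`) is the deviation for one-point windows
  set typical : Finset (K → ι) := {β | windowDeviation p (fun (_ : Unit) (k : K) => k) β ≤ ε}
  have htyp : 1 - Fintype.card ι * (√(Fintype.card K : ℝ) / Fintype.card K) / ε
      ≤ ∑ β ∈ typical, piWeight p β := by
    refine le_trans ?_ (one_sub_le_sum_piWeight_windowDeviation_le hp _ hε)
    rw [Fintype.card_unit, pow_one]
    gcongr
    exact_mod_cast card_collidingPairs_id_le
  have hweight : ∀ β ∈ good ∩ typical, piWeight p β ≤ exp (-X) := fun β hβ =>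
    piWeight_le_exp hp fun r =>
      (abs_sub_card_div_le_windowDeviation p β r).trans (mem_filter.1 (mem_inter.1 hβ).2).2
  calc _ ≤ (∑ β ∈ good ∩ typical, piWeight p β) * exp X := by
        gcongr
        linarith [one_sub_le_sum_piWeight_windowDeviation_le hp c hδ,
          sum_piWeight_add_sum_piWeight_sub_one_le hp good typical]
    _ ≤ (#(good ∩ typical) * exp (-X)) * exp X := by
        gcongr
        simpa using sum_le_card_nsmul _ _ _ hweight
    _ = #(good ∩ typical) := by rw [mul_assoc, ← exp_add, neg_add_cancel, exp_zero, mul_one]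
    _ ≤ #good := by exact_mod_cast card_le_card inter_subset_left

end Typicality

lemma card_filter_symm_apply_eq {α : Type*} [Fintype α] [DecidableEq α] (a b : Equiv.Perm α) :
    #{k | a.symm k = b.symm k} = #{k | a k = b k} :=
  card_nbij' a.symm a (fun k hk => by simp_all [Equiv.eq_symm_apply])
    (fun m hm => by simp_all [Equiv.symm_apply_eq]) (fun k _ => by simp) fun m _ => by simp

lemma ncard_iInter_image_preimage_eq_windowCount {ι K κ : Type*} [Fintype K] [Fintype κ]
    [DecidableEq ι] (σ : κ → Equiv.Perm K) (β : K → ι) (φ : κ → ι) :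
    (⋂ j, σ j '' (β ⁻¹' {φ j})).ncard = windowCount (fun j => (σ j).symm) β φ := by
  rw [windowCount, ← Set.ncard_coe_finset]
  congr 1
  ext k
  simp [Set.mem_image_equiv]

lemma measureReal_partition_mem_stdSimplex {X ι : Type*} [MeasurableSpace X] {μ : Measure X}
    [IsProbabilityMeasure μ] [Fintype ι] {R : ι → Set X} (hmeas : ∀ r, MeasurableSet (R r))
    (hdisj : Pairwise (Disjoint on R)) (hcover : ⋃ r, R r = Set.univ) :
    (fun r => μ.real (R r)) ∈ stdSimplex ℝ ι :=
  ⟨fun _ => measureReal_nonneg,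
    by rw [← measureReal_iUnion_fintype hdisj hmeas, hcover, probReal_univ]⟩

lemma log_card_div_le_log_card {ι K : Type*} [Fintype ι] [Fintype K] [DecidableEq K] [Nonempty K]
    (s : Finset (K → ι)) : 1 / (Fintype.card K : ℝ) * log #s ≤ log (Fintype.card ι) := by
  have hd : (0 : ℝ) < Fintype.card K := by exact_mod_cast Fintype.card_pos
  have hcard : (#s : ℝ) ≤ (Fintype.card ι : ℝ) ^ Fintype.card K := by
    exact_mod_cast (card_le_univ s).trans_eq Fintype.card_fun
  have hlog : log #s ≤ Fintype.card K * log (Fintype.card ι) := by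
    rcases (#s).eq_zero_or_pos with h | h
    · rw [h, Nat.cast_zero, log_zero]
      exact mul_nonneg hd.le (log_natCast_nonneg _)
    · rw [← log_pow]
      exact log_le_log (by exact_mod_cast h) hcard
  rw [one_div_mul_eq_div, div_le_iff₀ hd, mul_comm]
  exact hlog

lemma le_of_forall_pos_sub_mul_le {a b C : ℝ} (h : ∀ ε > 0, a - ε * C ≤ b) : a ≤ b :=
  le_of_tendsto (tendsto_nhdsWithin_of_tendsto_nhds (a := (0 : ℝ)) (s := Set.Ioi 0)
      ((by fun_prop : Continuous fun ε : ℝ => a - ε * C).tendsto' 0 _ (by simp)))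
    (eventually_nhdsWithin_of_forall fun ε hε => h ε hε)

lemma le_limsup_of_tendsto_of_eventually_le {α : Type*} {l : Filter α} [l.NeBot] {f g : α → ℝ}
    {a : ℝ} (hg : Tendsto g l (𝓝 a)) (hgf : ∀ᶠ i in l, g i ≤ f i)
    (hf : IsBoundedUnder (· ≤ ·) l f) : a ≤ limsup f l :=
  hg.limsup_eq.symm.le.trans (limsup_le_limsup hgf hg.isCoboundedUnder_le hf)

namespace SoficApproxSeq

variable {G : Type*} [Group G] (S : SoficApproxSeq G)

lemma tendsto_natCast_d : Tendsto (fun i => (S.d i : ℝ)) atTop atTop :=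
  tendsto_natCast_atTop_atTop.comp S.d_tendsto

lemma tendsto_card_symm_eq_div {g h : G} (hgh : g ≠ h) :
    Tendsto (fun i => (#{k | (S.σ i g).symm k = (S.σ i h).symm k} : ℝ) / S.d i) atTop (𝓝 0) := by
  have hcompl : ∀ i, (#{k | (S.σ i g).symm k = (S.σ i h).symm k} : ℝ) / S.d i
      = 1 - ({k | S.σ i g k ≠ S.σ i h k}.ncard : ℝ) / S.d i := by
    intro i
    have hd : (S.d i : ℝ) ≠ 0 := by exact_mod_cast (S.d_pos i).ne'
    rw [card_filter_symm_apply_eq, eq_sub_iff_add_eq, ← add_div, div_eq_one_iff_eq hd,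
      Set.ncard_eq_toFinset_card', Set.toFinset_ofPred]
    exact_mod_cast (card_filter_add_card_filter_not _).trans (card_fin _)
  simpa [hcompl] using (S.almost_free g h hgh).const_sub 1

variable [DecidableEq G] (F : Finset G)

lemma tendsto_card_collidingPoints_div :
    Tendsto (fun i => (#(collidingPoints fun g : F => (S.σ i g).symm) : ℝ) / S.d i)
      atTop (𝓝 0) := by
  have hsum := tendsto_finsetSum (univ : Finset F).offDiag fun jj hjj =>
    S.tendsto_card_symm_eq_div (Subtype.coe_injective.ne (mem_offDiag.1 hjj).2.2)
  refine squeeze_zero (fun i => by positivity) (fun i => ?_)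
    (by simpa only [sum_const_zero] using hsum)
  rw [← sum_div]
  gcongr
  exact_mod_cast card_collidingPoints_le fun g : F => (S.σ i g).symm

lemma tendsto_sqrt_card_collidingPairs_div :
    Tendsto (fun i => √(#(collidingPairs fun g : F => (S.σ i g).symm) : ℝ) / S.d i)
      atTop (𝓝 0) := by
  set P := fun i => (#(collidingPoints fun g : F => (S.σ i g).symm) : ℝ)
  have hbound : ∀ i, √(#(collidingPairs fun g : F => (S.σ i g).symm) : ℝ) / S.d i
      ≤ √(2 * (P i / S.d i) + (Fintype.card F : ℝ) ^ 2 / S.d i) := by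
    intro i
    have hd : (0 : ℝ) < S.d i := by exact_mod_cast S.d_pos i
    have hpairs := card_collidingPairs_le fun g : F => (S.σ i g).symm.injective
    rw [Fintype.card_fin] at hpairs
    rw [← sqrt_sq hd.le, ← sqrt_div' _ (sq_nonneg _), sqrt_sq hd.le]
    refine sqrt_le_sqrt ((div_le_iff₀ (by positivity)).2 ?_)
    calc (#(collidingPairs fun g : F => (S.σ i g).symm) : ℝ)
        ≤ (2 * P i + Fintype.card F ^ 2) * S.d i := by simp only [P]; exact_mod_cast hpairs
      _ = _ := by field_simp
  have hlim := ((S.tendsto_card_collidingPoints_div F).const_mul 2).add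
    (tendsto_const_nhds (x := (Fintype.card F : ℝ) ^ 2).div_atTop S.tendsto_natCast_d)
  refine squeeze_zero (fun i => by positivity) hbound ?_
  simpa using hlim.sqrt

variable {ι : Type*} [Fintype ι] [DecidableEq ι] {p : ι → ℝ}

theorem shannonEntropy_le_limsup_log_card_windowDeviation_le (hp : p ∈ stdSimplex ℝ ι)
    {δ : ℝ} (hδ : 0 < δ) :
    shannonEntropy p ≤ limsup (fun i => 1 / (S.d i : ℝ) *
      log #{β : Fin (S.d i) → ι | windowDeviation p (fun g : F => (S.σ i g).symm) β ≤ δ})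
      atTop := by
  have (i : ℕ) : Nonempty (Fin (S.d i)) := ⟨⟨0, S.d_pos i⟩⟩
  set C := ∑ r, |log (p r)|
  refine le_of_forall_pos_sub_mul_le (C := C) fun ε hε => ?_
  set e := fun i => 1 - Fintype.card ι ^ Fintype.card F *
      (√(#(collidingPairs fun g : F => (S.σ i g).symm) : ℝ) / S.d i) / δ
    - Fintype.card ι * (√(S.d i : ℝ) / S.d i) / ε
  have he : Tendsto e atTop (𝓝 1) := by
    have hpairs := ((S.tendsto_sqrt_card_collidingPairs_div F).const_mul
      (Fintype.card ι ^ Fintype.card F : ℝ)).div_const δ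
    have hsqrt : Tendsto (fun i => √(S.d i : ℝ) / S.d i) atTop (𝓝 0) := by
      simpa only [sqrt_div_self', Function.comp_def] using
        tendsto_const_nhds.div_atTop (tendsto_sqrt_atTop.comp S.tendsto_natCast_d)
    simpa [e] using ((tendsto_const_nhds (x := (1 : ℝ))).sub hpairs).sub
      ((hsqrt.const_mul (Fintype.card ι : ℝ)).div_const ε)
  refine le_limsup_of_tendsto_of_eventually_le
    (g := fun i => shannonEntropy p - ε * C + log (e i) / S.d i)
    (by simpa using tendsto_const_nhds.add ((he.log one_ne_zero).div_atTop S.tendsto_natCast_d))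
    ?_ (isBoundedUnder_of ⟨log (Fintype.card ι), fun i => by
      simpa using log_card_div_le_log_card (K := Fin (S.d i)) _⟩)
  filter_upwards [he.eventually (lt_mem_nhds zero_lt_one)] with i hi
  have hd : (0 : ℝ) < S.d i := by exact_mod_cast S.d_pos i
  have hcount := exp_mul_le_card_windowDeviation_le hp (fun g : F => (S.σ i g).symm) hδ hε
  rw [Fintype.card_fin] at hcount
  change e i * _ ≤ _ at hcount
  have hlog := log_le_log (by positivity) hcount
  rw [log_mul hi.ne' (exp_pos _).ne', log_exp] at hlog
  rw [one_div_mul_eq_div, le_div_iff₀ hd]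
  calc (shannonEntropy p - ε * C + log (e i) / S.d i) * S.d i
      = log (e i) + S.d i * (shannonEntropy p - ε * C) := by field_simp; ring
    _ ≤ _ := hlog

end SoficApproxSeq

theorem le_limsup_log_card_good_maps_general {G : Type*} [Group G] [DecidableEq G]
    (S : SoficApproxSeq G) {X : Type*} [MeasurableSpace X]
    (μ : Measure X) [IsProbabilityMeasure μ] {ι : Type*} [Fintype ι]
    (R : ι → Set X) (hmeas : ∀ r, MeasurableSet (R r))
    (hdisj : Pairwise (Function.onFun Disjoint R)) (hcover : (⋃ r, R r) = Set.univ)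
    (F : Finset G) (δ : ℝ) (hδ : 0 < δ) :
    (-∑ r : ι, (μ (R r)).toReal * Real.log (μ (R r)).toReal) ≤
      Filter.limsup (fun i =>
        (1 / (S.d i : ℝ)) * Real.log
          (({β : Fin (S.d i) → ι |
              ∑ φ : F → ι,
                |(∏ g : F, (μ (R (φ g))).toReal) -
                  ((⋂ g : F, (S.σ i g) '' (β ⁻¹' {φ g})).ncard : ℝ) / S.d i| ≤ δ}).ncard))
        atTop := by
  classical
  convert S.shannonEntropy_le_limsup_log_card_windowDeviation_le F
    (measureReal_partition_mem_stdSimplex (μ := μ) hmeas hdisj hcover) hδ using 6 with i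
  · rfl
  · rw [← Set.ncard_coe_finset]
    congr 1
    ext β
    simp [windowDeviation, ncard_iInter_image_preimage_eq_windowCount, measureReal_def]

/-- Bowen's lower bound: let `G` be a countable group with a sofic approximation sequence
`Σ = {σᵢ : G → Sym(dᵢ)}`, `(X,μ)` a standard probability space and `R = (R_r)_{r ∈ ι}` a
finite measurable partition of `X`. Then for every nonempty finite `F ⊆ G` and `δ > 0`,
`limsup_i (1/dᵢ) log |{β : {1,…,dᵢ} → R : ∑_{φ ∈ R^F} |∏_{g∈F} μ(φ(g)) −`
`ζ(⋂_{g∈F} σᵢ(g)(β⁻¹(φ(g))))| ≤ δ}| ≥ H_μ(R)`, where `ζ` is the uniform probability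
measure on `{1,…,dᵢ}`. -/
theorem le_limsup_log_card_good_maps {G : Type*} [Group G] [Countable G] [DecidableEq G]
    (S : SoficApproxSeq G) {X : Type*} [MeasurableSpace X] [StandardBorelSpace X]
    (μ : Measure X) [IsProbabilityMeasure μ] {ι : Type*} [Fintype ι]
    (R : ι → Set X) (hmeas : ∀ r, MeasurableSet (R r))
    (hdisj : Pairwise (Function.onFun Disjoint R)) (hcover : (⋃ r, R r) = Set.univ)
    (F : Finset G) (hF : F.Nonempty) (δ : ℝ) (hδ : 0 < δ) :
    (-∑ r : ι, (μ (R r)).toReal * Real.log (μ (R r)).toReal) ≤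
      Filter.limsup (fun i =>
        (1 / (S.d i : ℝ)) * Real.log
          (({β : Fin (S.d i) → ι |
              ∑ φ : F → ι,
                |(∏ g : F, (μ (R (φ g))).toReal) -
                  ((⋂ g : F, (S.σ i g) '' (β ⁻¹' {φ g})).ncard : ℝ) / S.d i| ≤ δ}).ncard))
        atTop :=
  le_limsup_log_card_good_maps_general S μ R hmeas hdisj hcover F δ hδ
end

section
/- Let R be a finite set and let μ : R → [0,1] satisfy ∑_{r∈R} μ(r) = 1. Let F be a nonempty finite set, d a positive integer, σ : F → Sym({1,…,d}) a map into the permutation group of {1,…,d}, β : {1,…,d} → R a map, and τ ≥ 0. Suppose that ∑_{φ ∈ R^F} | ∏_{g∈F} μ(φ(g)) − ζ( ⋂_{g∈F} σ(g)(β^{-1}(φ(g))) ) | ≤ τ. Then for every subset S ⊆ R one has | ζ(β^{-1}(S)) − ∑_{r∈S} μ(r) | ≤ τ. -/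
/-!
The sets `⋂ g, σ g '' (β ⁻¹' {φ g})` are the fibres of the label pattern
`k ↦ (g ↦ β ((σ g)⁻¹ k))`. Fix `g₀ : F` and sum over the `φ` with `φ g₀ ∈ S`: the fibres add up
to `σ g₀ '' (β ⁻¹' S)`, which has as many points as `β ⁻¹' S`, while the product weights add up
to the marginal `∑ r ∈ S, μ r`, since every other coordinate contributes a factor
`∑ r, μ r = 1`. The difference of the two sums is at most the full sum of absolute differences.
-/

open Finset

theorem sum_piFinset_update_prod_eq {ι α M : Type*} [Fintype ι] [DecidableEq ι] [Fintype α]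
    [CommSemiring M] {μ : α → M} (hμ : ∑ a, μ a = 1) (i : ι) (S : Finset α) :
    ∑ φ ∈ Fintype.piFinset (Function.update (fun _ => univ) i S), ∏ j, μ (φ j)
      = ∑ a ∈ S, μ a := by
  rw [← prod_univ_sum]
  simp only [Function.apply_update (fun _ s => ∑ a ∈ s, μ a), hμ]
  exact Fintype.prod_pi_mulSingle' i _

theorem sum_ncard_preimage_singleton {X Y : Type*} [Finite X] (ψ : X → Y) (T : Finset Y) :
    ∑ y ∈ T, (ψ ⁻¹' {y}).ncard = (ψ ⁻¹' T).ncard := by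
  rw [← Nat.card_coe_set_eq, card_preimage_eq_sum_card_image_eq fun _ _ => Set.toFinite _]
  rfl

theorem abs_sum_sub_sum_le {ι : Type*} [Fintype ι] (a b : ι → ℝ) (T : Finset ι) :
    |∑ i ∈ T, a i - ∑ i ∈ T, b i| ≤ ∑ i, |a i - b i| := by
  rw [← sum_sub_distrib]
  exact (abs_sum_le_sum_abs _ _).trans
    (sum_le_sum_of_subset_of_nonneg (subset_univ T) fun _ _ _ => abs_nonneg _)

section LabelPattern

variable {F X R : Type*} (σ : F → Equiv.Perm X) (β : X → R)

def labelPattern (k : X) : F → R := fun g => β ((σ g)⁻¹ k)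

theorem iInter_image_preimage_singleton (φ : F → R) :
    ⋂ g, σ g '' (β ⁻¹' {φ g}) = labelPattern σ β ⁻¹' {φ} := by
  ext k
  simp [labelPattern, funext_iff, Equiv.image_eq_preimage_symm]

theorem labelPattern_preimage_piFinset_update [Fintype F] [DecidableEq F] [Fintype R]
    (g : F) (S : Finset R) :
    labelPattern σ β ⁻¹' ↑(Fintype.piFinset (Function.update (fun _ => (univ : Finset R)) g S))
      = σ g '' (β ⁻¹' S) := by
  ext k
  simp [labelPattern, Function.update_apply, Equiv.image_eq_preimage_symm, mem_ite]

end LabelPattern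

theorem abs_empirical_sub_measure_le_general {R F : Type*} [Fintype R] [Fintype F] [DecidableEq F]
    [Nonempty F] (μ : R → ℝ)
    (hsum : ∑ r, μ r = 1) (d : ℕ) (σ : F → Equiv.Perm (Fin d))
    (β : Fin d → R) (τ : ℝ)
    (h : ∑ φ : F → R,
        |(∏ g : F, μ (φ g)) -
          ((⋂ g : F, (σ g) '' (β ⁻¹' {φ g})).ncard : ℝ) / d| ≤ τ) :
    ∀ S : Finset R, |((β ⁻¹' (S : Set R)).ncard : ℝ) / d - ∑ r ∈ S, μ r| ≤ τ := by
  intro S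
  classical
  obtain ⟨g₀⟩ := ‹Nonempty F›
  set T := Fintype.piFinset (Function.update (fun _ => (univ : Finset R)) g₀ S)
  have hmeasure : ∑ φ ∈ T, ∏ g, μ (φ g) = ∑ r ∈ S, μ r := sum_piFinset_update_prod_eq hsum g₀ S
  have hcount : ∑ φ ∈ T, ((⋂ g, σ g '' (β ⁻¹' {φ g})).ncard : ℝ) / d
      = ((β ⁻¹' (S : Set R)).ncard : ℝ) / d := by
    simp_rw [← sum_div, iInter_image_preimage_singleton]
    norm_cast
    rw [sum_ncard_preimage_singleton, labelPattern_preimage_piFinset_update,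
      Set.ncard_image_of_injective _ (σ g₀).injective]
  rw [← hmeasure, ← hcount, abs_sub_comm]
  exact (abs_sum_sub_sum_le _ _ T).trans h

/-- Let `R` be a finite set and `μ : R → [0,1]` with `∑_r μ(r) = 1`. Let `F` be a nonempty
finite set, `d` a positive integer, `σ : F → Sym({1,…,d})`, `β : {1,…,d} → R` and `τ ≥ 0`.
If `∑_{φ ∈ R^F} |∏_{g∈F} μ(φ(g)) − ζ(⋂_{g∈F} σ(g)(β⁻¹(φ(g))))| ≤ τ`, then for every
`S ⊆ R` one has `|ζ(β⁻¹(S)) − ∑_{r∈S} μ(r)| ≤ τ`. Here `ζ(A) = |A|/d`. -/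
theorem abs_empirical_sub_measure_le {R F : Type*} [Fintype R] [Fintype F] [DecidableEq F]
    [Nonempty F] (μ : R → ℝ) (hμ0 : ∀ r, 0 ≤ μ r) (hμ1 : ∀ r, μ r ≤ 1)
    (hsum : ∑ r, μ r = 1) (d : ℕ) (hd : 0 < d) (σ : F → Equiv.Perm (Fin d))
    (β : Fin d → R) (τ : ℝ) (hτ : 0 ≤ τ)
    (h : ∑ φ : F → R,
        |(∏ g : F, μ (φ g)) -
          ((⋂ g : F, (σ g) '' (β ⁻¹' {φ g})).ncard : ℝ) / d| ≤ τ) :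
    ∀ S : Finset R, |((β ⁻¹' (S : Set R)).ncard : ℝ) / d - ∑ r ∈ S, μ r| ≤ τ :=
  abs_empirical_sub_measure_le_general μ hsum d σ β τ h
end

section
/- Let R be a finite set, π : R → Q a surjection onto a finite set Q, and μ : R → [0,1] with ∑_{r∈R} μ(r) = 1; let μ̄ : Q → [0,1] be defined by μ̄(q) = ∑_{r ∈ π^{-1}(q)} μ(r). Then for every κ > 0 there exist constants C > 0 and τ₀ > 0 such that for every τ ∈ (0, τ₀], every positive integer d, and every map β : {1,…,d} → R, the number of maps γ : {1,…,d} → R satisfying π(γ(a)) = π(β(a)) for all a ∈ {1,…,d} and | |γ^{-1}(r)|/d − μ(r) | ≤ τ for all r ∈ R is at most C · d^{|Q|} · (2τd + 1)^{|R|} · exp( d · ( H(μ) − H(μ̄) + κ ) ). -/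
/-!
Sort the admissible maps `γ` by their type `n r = |γ⁻¹(r)|`. The normalised types `n / d` that are
`τ`-close to `μ` lie in a box containing at most `(2τd + 1)^|R|` lattice points. For a fixed type
`n`, let `m q = ∑_{π r = q} n r` and give every position `a` the distribution `p r = n r / m (π r)`
on the fibre of `π (β a)`. Under the product distribution each map of type `n` lying over `π ∘ β`
has the same mass `∏ p r ^ n r = exp (-d (H(n/d) - H(m/d)))`, so there are at most
`exp (d (H(n/d) - H(m/d)))` of them. Uniform continuity of `x ↦ -x log x` on `[0, 1]` bounds this
by `exp (d (H(μ) - H(μ̄) + κ))` once `τ` is small.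
-/

open Finset
open Real (negMulLog exp log)

section

variable {α : Type*}

lemma mul_negMulLog_div (x : ℝ) {d : ℝ} (hd : d ≠ 0) :
    d * negMulLog (x / d) = negMulLog x + x * log d := by
  have h := Real.negMulLog_mul (x / d) d
  rw [div_mul_cancel₀ x hd, show negMulLog d = -d * log d from rfl] at h
  rw [h]
  field_simp
  ring

lemma mul_sum_negMulLog_div (s : Finset α) (x : α → ℝ) {d : ℝ} (hd : d ≠ 0) :
    d * ∑ i ∈ s, negMulLog (x i / d) = ∑ i ∈ s, negMulLog (x i) + (∑ i ∈ s, x i) * log d := by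
  rw [mul_sum, sum_mul, ← sum_add_distrib]
  exact sum_congr rfl fun i _ => mul_negMulLog_div _ hd

lemma exists_negMulLog_le_add {ε : ℝ} (hε : 0 < ε) :
    ∃ δ > 0, ∀ x ∈ Set.Icc (0 : ℝ) 1, ∀ y ∈ Set.Icc (0 : ℝ) 1,
      |x - y| ≤ δ → negMulLog x ≤ negMulLog y + ε := by
  obtain ⟨δ, hδ, h⟩ := Metric.uniformContinuousOn_iff_le.1
    (isCompact_Icc.uniformContinuousOn_of_continuous Real.continuous_negMulLog.continuousOn) ε hε
  refine ⟨δ, hδ, fun x hx y hy hxy => ?_⟩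
  have := h x hx y hy hxy
  rw [Real.dist_eq] at this
  linarith [le_abs_self (negMulLog x - negMulLog y)]

variable [Fintype α]

lemma sum_negMulLog_le_add_of_abs_sub_le {δ ε : ℝ}
    (hcont : ∀ x ∈ Set.Icc (0 : ℝ) 1, ∀ y ∈ Set.Icc (0 : ℝ) 1,
      |x - y| ≤ δ → negMulLog x ≤ negMulLog y + ε)
    {x y : α → ℝ} (hx : ∀ i, x i ∈ Set.Icc 0 1) (hy : ∀ i, y i ∈ Set.Icc 0 1)
    (hxy : ∀ i, |x i - y i| ≤ δ) :
    ∑ i, negMulLog (x i) ≤ ∑ i, negMulLog (y i) + Fintype.card α * ε :=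
  calc ∑ i, negMulLog (x i) ≤ ∑ i, (negMulLog (y i) + ε) :=
        sum_le_sum fun i _ => hcont _ (hx i) _ (hy i) (hxy i)
    _ = _ := by rw [sum_add_distrib, sum_const, card_univ, nsmul_eq_mul]

lemma sum_mem_Icc_of_sum_eq_one {x : α → ℝ} (hx0 : ∀ i, 0 ≤ x i) (hx1 : ∑ i, x i = 1)
    (s : Finset α) : ∑ i ∈ s, x i ∈ Set.Icc 0 1 :=
  ⟨sum_nonneg fun i _ => hx0 i,
    hx1 ▸ sum_le_sum_of_subset_of_nonneg (subset_univ s) fun i _ _ => hx0 i⟩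

lemma mem_Icc_of_sum_eq_one {x : α → ℝ} (hx0 : ∀ i, 0 ≤ x i) (hx1 : ∑ i, x i = 1) (i : α) :
    x i ∈ Set.Icc 0 1 := by
  simpa using sum_mem_Icc_of_sum_eq_one hx0 hx1 {i}

lemma abs_sum_sub_sum_le_card_mul {x y : α → ℝ} {τ : ℝ} (h : ∀ i, |x i - y i| ≤ τ)
    (s : Finset α) : |∑ i ∈ s, x i - ∑ i ∈ s, y i| ≤ Fintype.card α * τ :=
  calc |∑ i ∈ s, x i - ∑ i ∈ s, y i| ≤ ∑ i ∈ s, |x i - y i| := by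
        rw [← sum_sub_distrib]; exact abs_sum_le_sum_abs _ _
    _ ≤ ∑ i, |x i - y i| :=
        sum_le_sum_of_subset_of_nonneg (subset_univ s) fun i _ _ => abs_nonneg _
    _ ≤ Fintype.card α * τ := by
        simpa using sum_le_sum fun i (_ : i ∈ univ) => h i

end

section Pushforward

variable {R Q : Type*} [Fintype R] [Fintype Q] [DecidableEq Q] (π : R → Q)

lemma sum_negMulLog_sub_pushforward_eq_mul (x : R → ℝ) {d : ℝ} (hd : d ≠ 0)
    (hx : ∑ r, x r = d) :
    ∑ r, negMulLog (x r) - ∑ q, negMulLog (∑ r with π r = q, x r) =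
      d * (∑ r, negMulLog (x r / d) - ∑ q, negMulLog (∑ r with π r = q, x r / d)) := by
  simp_rw [← sum_div]
  rw [mul_sub, mul_sum_negMulLog_div _ _ hd, mul_sum_negMulLog_div _ _ hd, sum_fiberwise, hx]
  ring

theorem sum_negMulLog_sub_pushforward_le {δ ε τ : ℝ}
    (hcont : ∀ x ∈ Set.Icc (0 : ℝ) 1, ∀ y ∈ Set.Icc (0 : ℝ) 1,
      |x - y| ≤ δ → negMulLog x ≤ negMulLog y + ε)
    {x y : R → ℝ} (hx0 : ∀ r, 0 ≤ x r) (hx1 : ∑ r, x r = 1) (hy0 : ∀ r, 0 ≤ y r)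
    (hy1 : ∑ r, y r = 1) (hxy : ∀ r, |x r - y r| ≤ τ) (hτ : 0 ≤ τ)
    (hτδ : (Fintype.card R + 1) * τ ≤ δ) :
    ∑ r, negMulLog (x r) - ∑ q, negMulLog (∑ r with π r = q, x r) ≤
      ∑ r, negMulLog (y r) - ∑ q, negMulLog (∑ r with π r = q, y r) +
        (Fintype.card R + Fintype.card Q) * ε := by
  have hRτ : Fintype.card R * τ ≤ δ := by linarith
  have hR := sum_negMulLog_le_add_of_abs_sub_le hcont (mem_Icc_of_sum_eq_one hx0 hx1)
    (mem_Icc_of_sum_eq_one hy0 hy1) fun r => (hxy r).trans (by nlinarith)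
  have hQ := sum_negMulLog_le_add_of_abs_sub_le hcont
    (fun q => sum_mem_Icc_of_sum_eq_one hy0 hy1 {r | π r = q})
    (fun q => sum_mem_Icc_of_sum_eq_one hx0 hx1 {r | π r = q})
    fun q => (abs_sum_sub_sum_le_card_mul (fun r => by rw [abs_sub_comm]; exact hxy r) _).trans hRτ
  linarith

end Pushforward

section Types

variable {ι R : Type*} [Fintype ι] [DecidableEq R]

def occurrences (γ : ι → R) (r : R) : ℕ := #{a | γ a = r}

lemma natCast_ncard_preimage_singleton (γ : ι → R) (r : R) :
    ((γ ⁻¹' {r}).ncard : ℝ) = occurrences γ r := by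
  rw [occurrences, ← Set.ncard_coe_finset, coe_filter]
  simp [Set.preimage]

variable [Fintype R]

lemma sum_occurrences (γ : ι → R) : ∑ r, occurrences γ r = Fintype.card ι := by
  rw [← card_univ, card_eq_sum_card_fiberwise fun a _ => mem_univ (γ a)]
  rfl

lemma prod_comp_eq_prod_pow_occurrences {M : Type*} [CommMonoid M] (p : R → M) (γ : ι → R) :
    ∏ a, p (γ a) = ∏ r, p r ^ occurrences γ r := by
  simp only [occurrences, ← prod_const]
  exact (prod_fiberwise' univ γ p).symm

end Types

lemma natCast_div_pow_self_eq_exp {k : ℕ} {y : ℝ} (hky : (k : ℝ) ≤ y) :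
    ((k : ℝ) / y) ^ k = exp (-negMulLog k - k * log y) := by
  rcases Nat.eq_zero_or_pos k with rfl | hk
  · simp
  have hk' : (0 : ℝ) < k := Nat.cast_pos.2 hk
  rw [← Real.exp_log (pow_pos (div_pos hk' (hk'.trans_le hky)) k), Real.log_pow,
    Real.log_div hk'.ne' (hk'.trans_le hky).ne', Real.negMulLog]
  ring_nf

section Weights

variable {ι R Q : Type*} [Fintype ι] [DecidableEq ι] [Fintype R]

theorem card_mul_le_one_of_le_prod {g : ι → R → ℝ} (hg0 : ∀ a r, 0 ≤ g a r)
    (hg1 : ∀ a, ∑ r, g a r ≤ 1) {T : Finset (ι → R)} {w : ℝ}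
    (hw : ∀ γ ∈ T, w ≤ ∏ a, g a (γ a)) : #T * w ≤ 1 :=
  calc #T * w = ∑ γ ∈ T, w := by rw [sum_const, nsmul_eq_mul]
    _ ≤ ∑ γ ∈ T, ∏ a, g a (γ a) := sum_le_sum hw
    _ ≤ ∑ γ : ι → R, ∏ a, g a (γ a) := sum_le_sum_of_subset_of_nonneg (subset_univ T)
        fun γ _ _ => prod_nonneg fun a _ => hg0 a (γ a)
    _ = ∏ a, ∑ r, g a r := (Fintype.prod_sum g).symm
    _ ≤ 1 := prod_le_one (fun a _ => sum_nonneg fun r _ => hg0 a r) fun a _ => hg1 a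

variable [Fintype Q] [DecidableEq Q] (π : R → Q)

lemma prod_div_sum_fibre_pow_eq_exp (n : R → ℕ) :
    ∏ r, ((n r : ℝ) / ∑ s with π s = π r, (n s : ℝ)) ^ n r =
      exp (∑ q, negMulLog (∑ r with π r = q, (n r : ℝ)) - ∑ r, negMulLog (n r)) := by
  have hfibre : ∑ r, (n r : ℝ) * log (∑ s with π s = π r, (n s : ℝ)) =
      -∑ q, negMulLog (∑ r with π r = q, (n r : ℝ)) := by
    rw [← sum_fiberwise univ π, ← sum_neg_distrib]
    refine sum_congr rfl fun q _ => ?_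
    rw [sum_congr rfl fun r hr => by rw [(mem_filter.1 hr).2], ← sum_mul, Real.negMulLog]
    ring
  have hle (r : R) : (n r : ℝ) ≤ ∑ s with π s = π r, (n s : ℝ) :=
    single_le_sum (fun _ _ => Nat.cast_nonneg _) (by simp)
  rw [prod_congr rfl fun r _ => natCast_div_pow_self_eq_exp (hle r), ← Real.exp_sum,
    sum_sub_distrib, sum_neg_distrib, hfibre]
  ring_nf

variable [DecidableEq R]

theorem card_le_exp_of_fibrewise_of_occurrences_eq (f : ι → Q) (n : R → ℕ)
    {T : Finset (ι → R)} (hT : ∀ γ ∈ T, (∀ a, π (γ a) = f a) ∧ occurrences γ = n) :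
    (#T : ℝ) ≤ exp (∑ r, negMulLog (n r) - ∑ q, negMulLog (∑ r with π r = q, (n r : ℝ))) := by
  set p : R → ℝ := fun r => n r / ∑ s with π s = π r, (n s : ℝ)
  have key := card_mul_le_one_of_le_prod (g := fun a r => if π r = f a then p r else 0)
    (fun a r => by split_ifs <;> positivity) (fun a => ?_) (T := T) (w := ∏ r, p r ^ n r)
    fun γ hγ => ?_
  · rwa [prod_div_sum_fibre_pow_eq_exp, ← le_div_iff₀ (Real.exp_pos _), one_div,
      ← Real.exp_neg, neg_sub] at key
  · -- a fibre of zero mass has `p = 0 / 0 = 0` on it, so the weights still sum to at most one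
    rw [← sum_filter, sum_congr rfl fun r hr =>
      show p r = n r / ∑ s with π s = f a, (n s : ℝ) by simp only [p, (mem_filter.1 hr).2],
      ← sum_div]
    exact div_self_le_one _
  · obtain ⟨hπ, rfl⟩ := hT γ hγ
    simp only [hπ, if_true]
    exact (prod_comp_eq_prod_pow_occurrences p γ).ge

end Weights

lemma natCast_card_Icc_ceil_floor_le {a b : ℝ} (hab : a ≤ b) (hb : 0 ≤ b) :
    (#(Icc ⌈a⌉₊ ⌊b⌋₊) : ℝ) ≤ b - a + 1 := by
  rw [Nat.card_Icc]
  rcases le_or_gt ⌈a⌉₊ (⌊b⌋₊ + 1) with h | h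
  · rw [Nat.cast_sub h]
    push_cast
    linarith [Nat.floor_le hb, Nat.le_ceil a]
  · rw [Nat.sub_eq_zero_of_le h.le, Nat.cast_zero]
    linarith

lemma natCast_card_le_card_image_mul {α β : Type*} [DecidableEq β] {s : Finset α} (f : α → β)
    {E : ℝ} (h : ∀ b ∈ s.image f, (#{a ∈ s | f a = b} : ℝ) ≤ E) :
    (#s : ℝ) ≤ #(s.image f) * E := by
  rw [card_eq_sum_card_image f s, Nat.cast_sum]
  exact (sum_le_sum h).trans_eq (by rw [sum_const, nsmul_eq_mul])

section Counting

variable {R Q : Type*} [Fintype R] [DecidableEq R] {d : ℕ}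

theorem card_image_occurrences_le {μ : R → ℝ} (hμ0 : ∀ r, 0 ≤ μ r) {τ : ℝ} (hτ : 0 ≤ τ)
    (hd : 0 < d) {S : Finset (Fin d → R)}
    (hS : ∀ γ ∈ S, ∀ r, |(occurrences γ r : ℝ) / d - μ r| ≤ τ) :
    (#(S.image occurrences) : ℝ) ≤ (2 * τ * d + 1) ^ Fintype.card R := by
  have hd' : (0 : ℝ) < d := Nat.cast_pos.2 hd
  have hsub : S.image occurrences ⊆
      Fintype.piFinset fun r => Icc ⌈d * μ r - d * τ⌉₊ ⌊d * μ r + d * τ⌋₊ := by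
    intro v hv
    obtain ⟨γ, hγ, rfl⟩ := mem_image.1 hv
    refine Fintype.mem_piFinset.2 fun r => mem_Icc.2 ⟨Nat.ceil_le.2 ?_, Nat.le_floor ?_⟩
    · have := (abs_le.1 (hS γ hγ r)).1
      rw [le_sub_iff_add_le, le_div_iff₀ hd'] at this
      linarith
    · have := (abs_le.1 (hS γ hγ r)).2
      rw [sub_le_iff_le_add, div_le_iff₀ hd'] at this
      linarith
  calc (#(S.image occurrences) : ℝ)
        ≤ ∏ r, (#(Icc ⌈d * μ r - d * τ⌉₊ ⌊d * μ r + d * τ⌋₊) : ℝ) := by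
        exact_mod_cast (card_le_card hsub).trans_eq (Fintype.card_piFinset _)
    _ ≤ ∏ _r : R, (2 * τ * d + 1) := prod_le_prod (fun _ _ => Nat.cast_nonneg _) fun r _ =>
        (natCast_card_Icc_ceil_floor_le (by nlinarith) (by have := hμ0 r; positivity)).trans_eq
          (by ring)
    _ = (2 * τ * d + 1) ^ Fintype.card R := by rw [prod_const, card_univ]

variable [Fintype Q] [DecidableEq Q] (π : R → Q)

theorem card_le_of_fibrewise_of_close {μ : R → ℝ} (hμ0 : ∀ r, 0 ≤ μ r)
    (hμ1 : ∑ r, μ r = 1) {δ ε τ κ : ℝ}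
    (hcont : ∀ x ∈ Set.Icc (0 : ℝ) 1, ∀ y ∈ Set.Icc (0 : ℝ) 1,
      |x - y| ≤ δ → negMulLog x ≤ negMulLog y + ε)
    (hτ : 0 ≤ τ) (hτδ : (Fintype.card R + 1) * τ ≤ δ)
    (hεκ : (Fintype.card R + Fintype.card Q) * ε ≤ κ) (hd : 0 < d) (f : Fin d → Q)
    {S : Finset (Fin d → R)}
    (hS : ∀ γ ∈ S, (∀ a, π (γ a) = f a) ∧ ∀ r, |(occurrences γ r : ℝ) / d - μ r| ≤ τ) :
    (#S : ℝ) ≤ (2 * τ * d + 1) ^ Fintype.card R *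
      exp (d * (∑ r, negMulLog (μ r) - ∑ q, negMulLog (∑ r with π r = q, μ r) + κ)) := by
  have hd' : (d : ℝ) ≠ 0 := Nat.cast_ne_zero.2 hd.ne'
  refine (natCast_card_le_card_image_mul occurrences fun v hv => ?_).trans
    (mul_le_mul_of_nonneg_right (card_image_occurrences_le hμ0 hτ hd fun γ hγ => (hS γ hγ).2)
      (Real.exp_pos _).le)
  obtain ⟨γ₀, hγ₀, rfl⟩ := mem_image.1 hv
  have htotal : ∑ r, (occurrences γ₀ r : ℝ) = d := by
    rw [← Nat.cast_sum, sum_occurrences, Fintype.card_fin]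
  have hx1 : ∑ r, (occurrences γ₀ r : ℝ) / d = 1 := by rw [← sum_div, htotal, div_self hd']
  have hentropy := sum_negMulLog_sub_pushforward_le π hcont
    (x := fun r => (occurrences γ₀ r : ℝ) / d) (fun r => by positivity) hx1 hμ0 hμ1
    (hS γ₀ hγ₀).2 hτ hτδ
  refine (card_le_exp_of_fibrewise_of_occurrences_eq π f (occurrences γ₀) fun γ hγ => ?_).trans ?_
  · rw [mem_filter] at hγ
    exact ⟨(hS γ hγ.1).1, hγ.2⟩
  · rw [sum_negMulLog_sub_pushforward_eq_mul π _ hd' htotal]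
    gcongr
    linarith

end Counting

theorem card_fibrewise_close_maps_le_general {R Q : Type*} [Fintype R] [Fintype Q] [DecidableEq Q]
    (π : R → Q) (μ : R → ℝ) (hμ0 : ∀ r, 0 ≤ μ r)
    (hsum : ∑ r, μ r = 1) (κ : ℝ) (hκ : 0 < κ) :
    ∃ C τ₀ : ℝ, 0 < C ∧ 0 < τ₀ ∧ ∀ τ : ℝ, 0 < τ → τ ≤ τ₀ → ∀ d : ℕ, 0 < d →
      ∀ β : Fin d → R,
      (({γ : Fin d → R | (∀ a, π (γ a) = π (β a)) ∧
          ∀ r : R, |((γ ⁻¹' {r}).ncard : ℝ) / d - μ r| ≤ τ}).ncard : ℝ) ≤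
        C * (d : ℝ) ^ (Fintype.card Q) * (2 * τ * d + 1) ^ (Fintype.card R) *
          Real.exp ((d : ℝ) *
            ((∑ r, Real.negMulLog (μ r)) -
              (∑ q, Real.negMulLog (∑ r ∈ univ.filter fun r => π r = q, μ r)) + κ)) := by
  classical
  set N : ℝ := Fintype.card R + Fintype.card Q
  have hεκ : N * (κ / (N + 1)) ≤ κ := by
    rw [mul_div_assoc']
    exact div_le_of_le_mul₀ (by positivity) hκ.le (by linarith)
  obtain ⟨δ, hδ, hcont⟩ := exists_negMulLog_le_add (div_pos hκ (by positivity : 0 < N + 1))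
  refine ⟨1, δ / (Fintype.card R + 1), one_pos, by positivity, fun τ hτ hτ₀ d hd β => ?_⟩
  rw [le_div_iff₀' (by positivity)] at hτ₀
  rw [Set.ncard_eq_toFinset_card', one_mul, mul_assoc _ _ (Real.exp _)]
  refine (card_le_of_fibrewise_of_close π hμ0 hsum hcont hτ.le hτ₀ hεκ hd (fun a => π (β a))
    fun γ hγ => ?_).trans
      (le_mul_of_one_le_left (by positivity) (one_le_pow₀ (Nat.one_le_cast.2 hd)))
  simpa [natCast_ncard_preimage_singleton] using hγ

/-- Let `R` be a finite set, `π : R → Q` a surjection onto a finite set `Q`, and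
`μ : R → [0,1]` a probability vector; let `μ̄(q) = ∑_{r ∈ π⁻¹(q)} μ(r)`. Then for every
`κ > 0` there exist `C > 0` and `τ₀ > 0` such that for every `τ ∈ (0, τ₀]`, every positive
integer `d` and every `β : {1,…,d} → R`, the number of maps `γ : {1,…,d} → R` with
`π ∘ γ = π ∘ β` and `||γ⁻¹(r)|/d − μ(r)| ≤ τ` for all `r` is at most
`C · d^{|Q|} · (2τd + 1)^{|R|} · exp(d·(H(μ) − H(μ̄) + κ))`, where `H` denotes Shannon
entropy with natural logarithm. -/
theorem card_fibrewise_close_maps_le {R Q : Type*} [Fintype R] [Fintype Q] [DecidableEq Q]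
    (π : R → Q) (hπ : Function.Surjective π) (μ : R → ℝ) (hμ0 : ∀ r, 0 ≤ μ r)
    (hμ1 : ∀ r, μ r ≤ 1) (hsum : ∑ r, μ r = 1) (κ : ℝ) (hκ : 0 < κ) :
    ∃ C τ₀ : ℝ, 0 < C ∧ 0 < τ₀ ∧ ∀ τ : ℝ, 0 < τ → τ ≤ τ₀ → ∀ d : ℕ, 0 < d →
      ∀ β : Fin d → R,
      (({γ : Fin d → R | (∀ a, π (γ a) = π (β a)) ∧
          ∀ r : R, |((γ ⁻¹' {r}).ncard : ℝ) / d - μ r| ≤ τ}).ncard : ℝ) ≤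
        C * (d : ℝ) ^ (Fintype.card Q) * (2 * τ * d + 1) ^ (Fintype.card R) *
          Real.exp ((d : ℝ) *
            ((∑ r, Real.negMulLog (μ r)) -
              (∑ q, Real.negMulLog (∑ r ∈ univ.filter fun r => π r = q, μ r)) + κ)) :=
  card_fibrewise_close_maps_le_general π μ hμ0 hsum κ hκ
end
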